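/- Let B be a nonempty set, n ≥ 1, q ∈ {1,…,n}, D ≥ 0, and let e, ê : B → ℝ^n be two families of (absolute-residual) vectors such that |e_i(β) − ê_i(β)| ≤ D for every β ∈ B and every i ∈ {1,…,n}. Define f_q(β) = (e(β))_(q) and f̂_q(β) = (ê(β))_(q), the q-th order statistics of e(β) and ê(β) respectively. If β* ∈ B minimizes f_q over B and β̂ ∈ B minimizes f̂_q over B, then |f_q(β*) − f_q(β̂)| ≤ 2D; that is, the optimal q-quantile objective computed on the original data, evaluated at the minimizer obtained from the aggregated data, differs from the true optimum by at most 2D. -/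

import Mathlib

open Finset

/-- The quantile (pinball) loss `ρ_τ(u)`: `τ*u` if `u ≥ 0`, `(τ-1)*u` if `u < 0`. -/
noncomputable def pinball (τ u : ℝ) : ℝ := if 0 ≤ u then τ * u else (τ - 1) * u

/-- The `τ` sample quantile function `L_τ(y, γ) = ∑ i, ρ_τ (y i - γ)`. -/
noncomputable def sampleQuantileFn {n : ℕ} (τ : ℝ) (y : Fin n → ℝ) (γ : ℝ) : ℝ :=
  ∑ i, pinball τ (y i - γ)

/-- `orderStat y i` is the `(i+1)`-th smallest entry of `y` (i.e. the `(i+1)`-th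
order statistic, with 0-indexed `i : Fin n`). -/
noncomputable def orderStat {n : ℕ} (y : Fin n → ℝ) (i : Fin n) : ℝ :=
  y (Tuple.sort y i)

/-- The `k`-sum operator `S_k(y)`: the sum of the `n - k + 1` largest entries of `y`,
i.e. the sum of the order statistics in (1-indexed) positions `k, …, n`. -/
noncomputable def ksum {n : ℕ} (y : Fin n → ℝ) (k : ℕ) : ℝ :=
  ∑ i ∈ Finset.univ.filter (fun i : Fin n => k ≤ (i : ℕ) + 1), orderStat y i

lemma orderStat_le_iff {n : ℕ} (y : Fin n → ℝ) (t : ℝ) (j : Fin n) :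
    orderStat y j ≤ t ↔ (j : ℕ) < Fintype.card {i // y i ≤ t} := by
  classical
  have h := Tuple.lt_card_le_iff_apply_le_of_monotone (f := y ∘ Tuple.sort y) (a := t)
    (j := j) (Tuple.monotone_sort y)
  rw [← Fintype.card_subtype] at h
  have hcard : Fintype.card {i // (y ∘ Tuple.sort y) i ≤ t}
      = Fintype.card {i // y i ≤ t} :=
    Fintype.card_congr ((Tuple.sort y).subtypeEquiv (fun i => Iff.rfl))
  rw [hcard] at h
  exact h.symm

lemma orderStat_mono {n : ℕ} {y z : Fin n → ℝ} (hyz : ∀ i, y i ≤ z i) (j : Fin n) :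
    orderStat y j ≤ orderStat z j := by
  classical
  rw [orderStat_le_iff]
  have hz : (j : ℕ) < Fintype.card {i // z i ≤ orderStat z j} :=
    (orderStat_le_iff z (orderStat z j) j).mp le_rfl
  refine lt_of_lt_of_le hz ?_
  exact Fintype.card_subtype_mono _ _ (fun i hi => (hyz i).trans hi)

lemma orderStat_add_const {n : ℕ} (y : Fin n → ℝ) (c : ℝ) (j : Fin n) :
    orderStat (fun i => y i + c) j = orderStat y j + c := by
  classical
  have key : ∀ t : ℝ, orderStat (fun i => y i + c) j ≤ t ↔ orderStat y j ≤ t - c := by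
    intro t
    rw [orderStat_le_iff, orderStat_le_iff]
    have hc : Fintype.card {i // y i + c ≤ t} = Fintype.card {i // y i ≤ t - c} :=
      Fintype.card_congr (Equiv.subtypeEquivRight
        (fun i => by constructor <;> intro _ <;> linarith))
    rw [hc]
  have h1 := (key (orderStat y j + c)).mpr (by linarith)
  have h2 := (key (orderStat (fun i => y i + c) j)).mp le_rfl
  linarith

lemma orderStat_lipschitz {n : ℕ} {y z : Fin n → ℝ} {D : ℝ}
    (hyz : ∀ i, |y i - z i| ≤ D) (j : Fin n) :
    |orderStat y j - orderStat z j| ≤ D := by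
  have h1 : orderStat y j ≤ orderStat z j + D := by
    rw [← orderStat_add_const z D j]
    exact orderStat_mono (fun i => by have := abs_le.mp (hyz i); linarith) j
  have h2 : orderStat z j ≤ orderStat y j + D := by
    rw [← orderStat_add_const y D j]
    exact orderStat_mono (fun i => by have := abs_le.mp (hyz i); linarith) j
  rw [abs_le]; constructor <;> linarith

/-- aggregation error bound. If the absolute-residual vectors
`e β` (original data) and `eHat β` (aggregated data) differ componentwise by at
most `D` uniformly in `β`, and `bStar` minimizes `β ↦ (e β)_(q)` while `bHat`
minimizes `β ↦ (eHat β)_(q)`, then `|(e bStar)_(q) − (e bHat)_(q)| ≤ 2·D`. -/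
theorem stmt_17 {B : Type*} [Nonempty B] (n : ℕ) (hn : 1 ≤ n) (q : ℕ) (hq1 : 1 ≤ q)
    (hq2 : q ≤ n) (D : ℝ) (hD : 0 ≤ D) (e eHat : B → Fin n → ℝ)
    (h : ∀ β, ∀ i, |e β i - eHat β i| ≤ D) (bStar bHat : B)
    (hStar : ∀ β, orderStat (e bStar) ⟨q - 1, by omega⟩
        ≤ orderStat (e β) ⟨q - 1, by omega⟩)
    (hHat : ∀ β, orderStat (eHat bHat) ⟨q - 1, by omega⟩
        ≤ orderStat (eHat β) ⟨q - 1, by omega⟩) :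
    |orderStat (e bStar) ⟨q - 1, by omega⟩ - orderStat (e bHat) ⟨q - 1, by omega⟩|
      ≤ 2 * D := by
  set j : Fin n := ⟨q - 1, by omega⟩
  have l1 := orderStat_lipschitz (h bHat) j
  have l2 := orderStat_lipschitz (h bStar) j
  have h1 : orderStat (e bStar) j ≤ orderStat (e bHat) j := hStar bHat
  have h2 : orderStat (eHat bHat) j ≤ orderStat (eHat bStar) j := hHat bStar
  have a1 := abs_le.mp l1
  have a2 := abs_le.mp l2
  rw [abs_le]
  constructor <;> linarith
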